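/- arXiv:1512.03002 — 3 statements merged into one kernel-verified Lean document; each statement's English description precedes it below -/
import Mathlib

section
/- Let a₁ : ℝ → ℝ be real-analytic on an open interval J containing 0 and a set I ⊆ J ∩ (−∞,0), where J is connected and I has an accumulation point in J. Suppose a₁(s) > 0 for s > 0, let m > 0 with [0,m] ⊆ J, and define A₁(τ) = ∫_τ^{−τ+m} a₁(s) ds (assume −τ+m ∈ J for τ ∈ J as relevant). If A₁ vanishes on I, then A₁ vanishes identically on J; in particular ∫₀^m a₁(s) ds = 0, which is impossible since a₁ > 0 on (0,m]. -/
/-!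
Differentiating under both limits gives `A₁' τ = -(a₁ (-τ + m) + a₁ τ)`. By Rolle's theorem the
zeros of `A₁` accumulating at `x` produce zeros of this real-analytic function accumulating at `x`,
so by the identity theorem it vanishes on the connected set `J`. At `τ = 0` this reads
`a₁ m + a₁ 0 = 0`, impossible since `a₁ m > 0` and, by continuity, `a₁ 0 ≥ 0`.
-/

open Set Filter Topology MeasureTheory Metric

theorem intervalIntegral.hasDerivAt_integral_comp {E : Type*} [NormedAddCommGroup E]
    [NormedSpace ℝ E] [CompleteSpace E] {f : ℝ → E} {u v : ℝ → ℝ} {u' v' t : ℝ}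
    (hf : IntervalIntegrable f volume (u t) (v t))
    (hmu : StronglyMeasurableAtFilter f (𝓝 (u t))) (hmv : StronglyMeasurableAtFilter f (𝓝 (v t)))
    (hfu : ContinuousAt f (u t)) (hfv : ContinuousAt f (v t))
    (hu : HasDerivAt u u' t) (hv : HasDerivAt v v' t) :
    HasDerivAt (fun s => ∫ x in u s..v s, f x) (v' • f (v t) - u' • f (u t)) t := by
  simpa [Function.comp_def] using
    (intervalIntegral.integral_hasFDerivAt hf hmu hmv hfu hfv).comp_hasDerivAt t (hu.prodMk hv)

theorem hasDerivAt_integral_neg_add_const {f : ℝ → ℝ} {J : Set ℝ} (hJo : IsOpen J)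
    (hJ : J.OrdConnected) (hf : ContinuousOn f J) {m τ : ℝ} (hτ : τ ∈ J) (hτ' : -τ + m ∈ J) :
    HasDerivAt (fun τ => ∫ s in τ..(-τ + m), f s) (-(f (-τ + m) + f τ)) τ := by
  refine (intervalIntegral.hasDerivAt_integral_comp (u := fun τ => τ) (v := fun τ => -τ + m)
    (hf.mono (hJ.uIcc_subset hτ hτ')).intervalIntegrable
    (hf.stronglyMeasurableAtFilter hJo τ hτ) (hf.stronglyMeasurableAtFilter hJo _ hτ')
    (hf.continuousAt (hJo.mem_nhds hτ)) (hf.continuousAt (hJo.mem_nhds hτ'))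
    (hasDerivAt_id' τ) ((hasDerivAt_id' τ).neg.add_const m)).congr_deriv ?_
  simp only [smul_eq_mul]
  ring

theorem frequently_eq_zero_of_hasDerivAt_of_frequently_eq_zero {f f' : ℝ → ℝ} {x : ℝ}
    (hf : ∀ᶠ t in 𝓝 x, HasDerivAt f (f' t) t) (hz : ∃ᶠ t in 𝓝[≠] x, f t = 0) :
    ∃ᶠ t in 𝓝[≠] x, f' t = 0 := by
  obtain ⟨δ, hδ, hfδ⟩ := Metric.eventually_nhds_iff_ball.mp hf
  have hfx : f x = 0 :=
    tendsto_nhds_unique_of_frequently_eq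
      (hfδ x (mem_ball_self hδ)).continuousAt.continuousWithinAt tendsto_const_nhds hz
  rw [nhdsWithin_basis_ball.frequently_iff] at hz ⊢
  intro ε hε
  obtain ⟨z, ⟨hzB, hzx⟩, hfz⟩ := hz (min ε δ) (lt_min hε hδ)
  have hsub : uIcc z x ⊆ ball x (min ε δ) :=
    (convex_ball x _).ordConnected.uIcc_subset hzB (mem_ball_self (lt_min hε hδ))
  have hderiv : ∀ s ∈ uIcc z x, HasDerivAt f (f' s) s := fun s hs =>
    hfδ s (ball_subset_ball (min_le_right ε δ) (hsub hs))
  have hends : f (min z x) = f (max z x) := by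
    rcases le_total z x with h | h <;> simp [h, hfz, hfx]
  -- Rolle between the zero `z ≠ x` and `x` itself, a zero by continuity.
  obtain ⟨c, hc, hfc⟩ := exists_hasDerivAt_eq_zero (min_lt_max.2 hzx)
    (fun s hs => (hderiv s hs).continuousAt.continuousWithinAt) hends
    (fun s hs => hderiv s (Ioo_subset_Icc_self hs))
  refine ⟨c, ⟨ball_subset_ball (min_le_left ε δ) (hsub (Ioo_subset_Icc_self hc)), ?_⟩, hfc⟩
  rintro rfl
  simp only [mem_Ioo, min_lt_iff, lt_max_iff, lt_self_iff_false, or_false] at hc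
  exact hc.1.asymm hc.2

theorem stmt4_general (J : Set ℝ) (hJo : IsOpen J) (hJc : IsConnected J)
    (m : ℝ) (hm : 0 < m) (hJm : Set.Icc (0:ℝ) m ⊆ J)
    (hrefl : ∀ τ ∈ J, -τ + m ∈ J)
    (a₁ : ℝ → ℝ) (ha : AnalyticOn ℝ a₁ J)
    (hpos : ∀ s : ℝ, 0 < s → 0 < a₁ s)
    (I : Set ℝ)
    (x : ℝ) (hxJ : x ∈ J) (hx : AccPt x (Filter.principal I))
    (hzero : ∀ τ₀ ∈ I, (∫ s in τ₀..(-τ₀ + m), a₁ s) = 0) :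
    (∀ τ ∈ J, (∫ s in τ..(-τ + m), a₁ s) = 0) ∧
    (∫ s in (0:ℝ)..m, a₁ s) = 0 ∧ False := by
  have h0J : (0 : ℝ) ∈ J := hJm ⟨le_rfl, hm.le⟩
  have haN : AnalyticOnNhd ℝ a₁ J := hJo.analyticOn_iff_analyticOnNhd.mp ha
  have hcont : ContinuousOn a₁ J := haN.continuousOn
  set g : ℝ → ℝ := fun τ => a₁ (-τ + m) + a₁ τ with hg_def
  have hA : ∀ τ ∈ J, HasDerivAt (fun τ => ∫ s in τ..(-τ + m), a₁ s) (-g τ) τ := fun τ hτ =>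
    hasDerivAt_integral_neg_add_const hJo hJc.isPreconnected.ordConnected hcont hτ (hrefl τ hτ)
  have hg : AnalyticOnNhd ℝ g J := fun τ hτ =>
    ((haN _ (hrefl τ hτ)).comp (f := fun τ => -τ + m) (analyticAt_id.neg.add analyticAt_const)).add
      (haN τ hτ)
  have hfreq : ∃ᶠ τ in 𝓝[≠] x, g τ = 0 := by
    simpa using frequently_eq_zero_of_hasDerivAt_of_frequently_eq_zero
      (eventually_of_mem (hJo.mem_nhds hxJ) hA) ((accPt_iff_frequently_nhdsNE.mp hx).mono hzero)
  have hg0 : a₁ m + a₁ 0 = 0 := by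
    simpa [hg_def] using
      hg.eqOn_zero_of_preconnected_of_frequently_eq_zero hJc.isPreconnected hxJ hfreq h0J
  have ha0 : 0 ≤ a₁ 0 :=
    ge_of_tendsto ((hcont.continuousAt (hJo.mem_nhds h0J)).tendsto.mono_left
      (nhdsWithin_le_nhds (s := Ioi 0)))
      (eventually_nhdsWithin_of_forall fun s hs => (hpos s hs).le)
  exact ((add_pos_of_pos_of_nonneg (hpos m hm) ha0).ne' hg0).elim

/-- Identity-theorem step: a₁ real-analytic on an open connected J containing 0,
[0,m] ⊆ J, a₁ > 0 for s > 0, I ⊆ J ∩ (−∞,0) with an accumulation point in J,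
A₁(τ) = ∫_τ^{−τ+m} a₁ vanishing on I. Then A₁ vanishes identically on J; in
particular ∫₀^m a₁ = 0, which is impossible. -/
theorem stmt4 (J : Set ℝ) (hJo : IsOpen J) (hJc : IsConnected J)
    (m : ℝ) (hm : 0 < m) (hJm : Set.Icc (0:ℝ) m ⊆ J)
    (hrefl : ∀ τ ∈ J, -τ + m ∈ J)
    (a₁ : ℝ → ℝ) (ha : AnalyticOn ℝ a₁ J)
    (hpos : ∀ s : ℝ, 0 < s → 0 < a₁ s)
    (I : Set ℝ) (hI : I ⊆ J ∩ Set.Iio 0)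
    (x : ℝ) (hxJ : x ∈ J) (hx : AccPt x (Filter.principal I))
    (hzero : ∀ τ₀ ∈ I, (∫ s in τ₀..(-τ₀ + m), a₁ s) = 0) :
    (∀ τ ∈ J, (∫ s in τ..(-τ + m), a₁ s) = 0) ∧
    (∫ s in (0:ℝ)..m, a₁ s) = 0 ∧ False :=
  stmt4_general J hJo hJc m hm hJm hrefl a₁ ha hpos I x hxJ hx hzero
end

section
/- Fix a > 0 and define h(τ) = (aτ + 1) e^{−aτ} for τ ∈ ℝ. For real τ₀ < 0 and τ* > 0, the entry/exit balance ∫_{τ₀}^{τ*} e^{−as}s ds = 0 holds if and only if (aτ* + 1) e^{aτ₀} = e^{aτ*}(aτ₀ + 1). Moreover, for any κ > 0 there exists a > 0 such that for all τ₀ ≤ −κ there is no real solution τ* > 0 of this equation (i.e., the exit time is infinite). -/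
/-! `s ↦ -e^{-as}(as + 1)/a²` is an antiderivative of `s ↦ e^{-as} s`, so the balance
`∫_{τ₀}^{τ*} e^{-as} s ds = 0` reads `e^{-aτ₀}(aτ₀ + 1) = e^{-aτ*}(aτ* + 1)`; multiplying by
`e^{aτ₀} e^{aτ*}` gives the stated equation. Its left side is positive for `τ* > 0`, while its
right side is negative as soon as `aτ₀ + 1 < 0`, which `a = 2/κ` guarantees for all `τ₀ ≤ -κ`. -/

open Real

lemma hasDerivAt_exp_neg_mul_antideriv {a : ℝ} (ha : a ≠ 0) (s : ℝ) :
    HasDerivAt (fun s => -(exp (-a * s) * (a * s + 1)) / a ^ 2) (exp (-a * s) * s) s := by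
  have hexp : HasDerivAt (fun s => exp (-a * s)) (exp (-a * s) * -a) s :=
    ((hasDerivAt_id s).const_mul (-a)).exp.congr_deriv (by simp)
  have hlin : HasDerivAt (fun s => a * s + 1) a s :=
    (((hasDerivAt_id s).const_mul a).add_const 1).congr_deriv (by simp)
  refine ((hexp.mul hlin).neg.div_const (a ^ 2)).congr_deriv ?_
  field_simp
  ring

lemma integral_exp_neg_mul_mul_self {a : ℝ} (ha : a ≠ 0) (x y : ℝ) :
    ∫ s in x..y, exp (-a * s) * s
      = (exp (-a * x) * (a * x + 1) - exp (-a * y) * (a * y + 1)) / a ^ 2 := by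
  have hint : IntervalIntegrable (fun s => exp (-a * s) * s) MeasureTheory.volume x y :=
    (by fun_prop : Continuous fun s => exp (-a * s) * s).intervalIntegrable x y
  rw [intervalIntegral.integral_eq_sub_of_hasDerivAt
    (fun s _ => hasDerivAt_exp_neg_mul_antideriv ha s) hint]
  ring

lemma integral_exp_neg_mul_mul_self_eq_zero_iff {a : ℝ} (ha : a ≠ 0) (x y : ℝ) :
    ∫ s in x..y, exp (-a * s) * s = 0 ↔
      (a * y + 1) * exp (a * x) = exp (a * y) * (a * x + 1) := by
  have hx : exp (-a * x) * exp (a * x) = 1 := by rw [← exp_add]; simp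
  have hy : exp (-a * y) * exp (a * y) = 1 := by rw [← exp_add]; simp
  rw [integral_exp_neg_mul_mul_self ha, div_eq_zero_iff, or_iff_left (by positivity), sub_eq_zero]
  constructor
  · intro h
    linear_combination (exp (a * x) * exp (a * y)) * h.symm
      - (a * y + 1) * exp (a * x) * hy + exp (a * y) * (a * x + 1) * hx
  · intro h
    linear_combination (exp (-a * x) * exp (-a * y)) * h.symm
      - exp (-a * x) * (a * x + 1) * hy + exp (-a * y) * (a * y + 1) * hx

lemma mul_exp_ne_exp_mul_of_neg_of_pos {a x y : ℝ} (hx : a * x + 1 < 0) (hy : 0 < a * y + 1) :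
    (a * y + 1) * exp (a * x) ≠ exp (a * y) * (a * x + 1) := by
  have hlhs : 0 < (a * y + 1) * exp (a * x) := by positivity
  have hrhs : exp (a * y) * (a * x + 1) < 0 := mul_neg_of_pos_of_neg (exp_pos _) hx
  exact (hrhs.trans hlhs).ne'

/-- Entry/exit balance for the modified Hopf normal form: for a > 0, τ₀ < 0 < τ*,
∫_{τ₀}^{τ*} e^{−as}s ds = 0 iff (aτ*+1)e^{aτ₀} = e^{aτ*}(aτ₀+1); moreover, for
every κ > 0 there is a > 0 such that for all τ₀ ≤ −κ there is no real exit time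
τ* > 0 solving this equation. -/
theorem stmt6 :
    (∀ a : ℝ, 0 < a → ∀ τ₀ τs : ℝ, τ₀ < 0 → 0 < τs →
      ((∫ s in τ₀..τs, Real.exp (-a*s) * s) = 0 ↔
        (a*τs + 1) * Real.exp (a*τ₀) = Real.exp (a*τs) * (a*τ₀ + 1))) ∧
    (∀ κ : ℝ, 0 < κ → ∃ a : ℝ, 0 < a ∧ ∀ τ₀ : ℝ, τ₀ ≤ -κ →
      ¬ ∃ τs : ℝ, 0 < τs ∧
        (a*τs + 1) * Real.exp (a*τ₀) = Real.exp (a*τs) * (a*τ₀ + 1)) := by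
  refine ⟨fun a ha τ₀ τs _ _ => integral_exp_neg_mul_mul_self_eq_zero_iff ha.ne' τ₀ τs, ?_⟩
  intro κ hκ
  refine ⟨2 / κ, by positivity, fun τ₀ hτ₀ ⟨τs, hτs, heq⟩ => ?_⟩
  have hentry : 2 / κ * τ₀ + 1 < 0 := by
    have : 2 / κ * τ₀ ≤ 2 / κ * -κ := mul_le_mul_of_nonneg_left hτ₀ (by positivity)
    have : 2 / κ * -κ = -2 := by field_simp
    linarith
  exact mul_exp_ne_exp_mul_of_neg_of_pos hentry (by positivity) heq
end

section
/- Let Π(s) = s + Σ_{j≥2} π_j s^j be a formal power series with π₀ = 0 and π₁ = 1. Suppose (v_k)_{k≥1} is a nontrivial sequence (some v_j ≠ 0) satisfying the formal power series identity Σ_{k≥1} v_k Π(s)^{k+1} = Σ_{k≥1} v_k s^{k+1}. Then π_j = 0 for all j ≥ 2, i.e., Π(s) = s. -/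
/-!
By strong induction on the index, assume π₂ = ⋯ = π_r = 0 (r ≥ 1), so that Π = X (1 + X^r T)
with T(0) = π_{r+1}. Then Π^N ≡ X^N + N X^{N+r} T modulo X^{N+2r}. If j is the least index with
v_j ≠ 0, comparing the coefficients of s^{j+1+r} in the identity leaves only
v_j (j + 1) π_{r+1} = 0, hence π_{r+1} = 0.
-/

open PowerSeries Finset

theorem exists_one_add_pow_eq {A : Type*} [CommSemiring A] (a : A) (N : ℕ) :
    ∃ S, (1 + a) ^ N = 1 + N * a + a ^ 2 * S := by
  induction N with
  | zero => exact ⟨0, by simp⟩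
  | succ N ih =>
    obtain ⟨S, hS⟩ := ih
    exact ⟨N + S * (1 + a), by rw [pow_succ, hS]; push_cast; ring⟩

namespace PowerSeries

variable {A : Type*}

theorem coeff_X_mul_one_add_X_pow_mul_pow [CommSemiring A] (T : A⟦X⟧) {r N n : ℕ}
    (hn : n < N + 2 * r) :
    coeff n ((X * (1 + X ^ r * T)) ^ N)
      = coeff n (X ^ N) + (N : A) * coeff n (X ^ (N + r) * T) := by
  obtain ⟨S, hS⟩ := exists_one_add_pow_eq (X ^ r * T) N
  have hrem : coeff n (X ^ (N + 2 * r) * (T ^ 2 * S)) = 0 := by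
    rw [coeff_X_pow_mul', if_neg (by omega)]
  have hexp : X ^ N * (1 + C (N : A) * (X ^ r * T) + (X ^ r * T) ^ 2 * S)
      = X ^ N + C (N : A) * (X ^ (N + r) * T) + X ^ (N + 2 * r) * (T ^ 2 * S) := by ring
  rw [mul_pow, hS, ← map_natCast (C (R := A)) N, hexp, map_add, map_add, hrem, add_zero,
    coeff_C_mul]

theorem exists_eq_X_mul_one_add_X_pow_mul [CommRing A] {P : A⟦X⟧} (h0 : coeff 0 P = 0)
    (h1 : coeff 1 P = 1) {r : ℕ} (hr : 1 ≤ r) (hlow : ∀ i, 2 ≤ i → i ≤ r → coeff i P = 0) :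
    ∃ T, P = X * (1 + X ^ r * T) ∧ coeff 0 T = coeff (r + 1) P := by
  have hdvd : X ^ (r + 1) ∣ P - X := by
    refine X_pow_dvd_iff.2 fun i hi => ?_
    rw [map_sub, coeff_X]
    rcases Nat.lt_or_ge i 2 with hi2 | hi2
    · interval_cases i <;> simp [h0, h1]
    · rw [hlow i hi2 (by omega), if_neg (by omega), sub_zero]
  obtain ⟨T, hT⟩ := hdvd
  refine ⟨T, by rw [mul_add, ← mul_assoc, ← pow_succ', ← hT]; ring, ?_⟩
  have := congrArg (coeff (r + 1)) hT
  rwa [map_sub, coeff_X, if_neg (by omega), sub_zero, coeff_X_pow_mul', if_pos le_rfl,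
    Nat.sub_self, eq_comm] at this

theorem sum_mul_coeff_X_mul_one_add_X_pow_mul_pow [CommSemiring A] (T : A⟦X⟧) {r : ℕ}
    (hr : 1 ≤ r) (v : ℕ → A) {j : ℕ} (hj : 1 ≤ j) (hv : ∀ k, 1 ≤ k → k < j → v k = 0) :
    ∑ k ∈ Icc 1 (j + 1 + r), v k * coeff (j + 1 + r) ((X * (1 + X ^ r * T)) ^ (k + 1))
      = ∑ k ∈ Icc 1 (j + 1 + r), v k * coeff (j + 1 + r) (X ^ (k + 1))
        + v j * ((j + 1) * coeff 0 T) := by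
  have hterm : ∀ k ∈ Icc 1 (j + 1 + r),
      v k * coeff (j + 1 + r) ((X * (1 + X ^ r * T)) ^ (k + 1))
        = v k * coeff (j + 1 + r) (X ^ (k + 1))
          + v k * ((k + 1 : ℕ) * coeff (j + 1 + r) (X ^ (k + 1 + r) * T)) := by
    intro k hk
    rw [mem_Icc] at hk
    rcases Nat.lt_or_ge k j with hkj | hjk
    · simp [hv k hk.1 hkj]
    · rw [coeff_X_mul_one_add_X_pow_mul_pow T (N := k + 1) (by omega), mul_add]
  rw [sum_congr rfl hterm, sum_add_distrib]
  congr 1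
  rw [sum_eq_single j]
  · rw [coeff_X_pow_mul', if_pos le_rfl, Nat.sub_self]
    push_cast
    ring
  · intro k hk hkj
    rw [mem_Icc] at hk
    rcases Nat.lt_or_gt_of_ne hkj with hlt | hgt
    · rw [hv k hk.1 hlt, zero_mul]
    · rw [coeff_X_pow_mul', if_neg (by omega), mul_zero, mul_zero]
  · exact fun hj' => absurd (mem_Icc.2 ⟨hj, by omega⟩) hj'

end PowerSeries

/-- If π₀ = 0, π₁ = 1 and there is a nontrivial sequence (v_k) with
Σ_{k≥1} v_k Π(s)^{k+1} = Σ_{k≥1} v_k s^{k+1} (coefficient-wise), then π_j = 0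
for all j ≥ 2, i.e. Π(s) = s. -/
theorem stmt16 (P : PowerSeries ℝ) (h0 : PowerSeries.coeff 0 P = 0)
    (h1 : PowerSeries.coeff 1 P = 1) (v : ℕ → ℝ)
    (hnt : ∃ j : ℕ, 1 ≤ j ∧ v j ≠ 0)
    (hid : ∀ n : ℕ,
      ∑ k ∈ Finset.Icc 1 n, v k * PowerSeries.coeff n (P^(k+1))
        = ∑ k ∈ Finset.Icc 1 n,
            v k * PowerSeries.coeff n ((PowerSeries.X : PowerSeries ℝ)^(k+1))) :
    ∀ j : ℕ, 2 ≤ j → PowerSeries.coeff j P = 0 := by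
  intro m
  induction m using Nat.strong_induction_on with
  | _ m ih =>
  intro hm
  obtain ⟨r, rfl⟩ : ∃ r, m = r + 1 := ⟨m - 1, by omega⟩
  obtain ⟨T, hPT, hT0⟩ := exists_eq_X_mul_one_add_X_pow_mul h0 h1 (r := r) (by omega)
    fun i hi2 hir => ih i (by omega) hi2
  classical
  obtain ⟨hj, hvj⟩ := Nat.find_spec hnt
  have hv : ∀ k, 1 ≤ k → k < Nat.find hnt → v k = 0 :=
    fun k hk hkj => not_not.1 fun hvk => Nat.find_min hnt hkj ⟨hk, hvk⟩
  have key := hid (Nat.find hnt + 1 + r)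
  rw [hPT, sum_mul_coeff_X_mul_one_add_X_pow_mul_pow T (by omega) v hj hv, add_eq_left] at key
  rw [← hT0]
  simpa [hvj, Nat.cast_add_one_ne_zero] using key
end
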